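/- arXiv:2403.01547 — 3 statements merged into one kernel-verified Lean document; each statement's English description precedes it below -/
import Mathlib

section
/- Let t ≥ 1 and g ∈ (Z/tZ)* with multiplicative order d. For the initial sequences c^0_k(b_0) = k + b_0 mod t (0 ≤ k, b_0 ≤ t-1) and the iterated sequences c^n_k of length d^n·t defined by c^n_k(b_n) = g^{a_n}···g^{a_1}·(k + a_1 + b_0) mod t (where b_n = a_n d^{n-1} t + b_{n-1}, 0 ≤ a_j ≤ d-1), any two distinct sequences c^n_{k_1} and c^n_{k_2} with k_1 ≢ k_2 (mod t) disagree at every position; i.e., their Hamming correlation at shift 0 is zero. -/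
/-- Second construction, zero Hamming correlation: for a unit g of ℤ/tℤ and
distinct k₁ ≠ k₂ in ℤ/tℤ, the iterated sequences
c^n_k(b_n) = g^{a₁+⋯+aₙ}·(k + a₁ + b₀) disagree at every position. -/
theorem second_construction_zero_corr (t : ℕ) (ht : 0 < t) (g : (ZMod t)ˣ)
    (n : ℕ) (hn : 1 ≤ n) (k₁ k₂ : ZMod t) (hk : k₁ ≠ k₂)
    (a : Fin n → ℕ) (b₀ : ZMod t) :
    (g : ZMod t) ^ (∑ j, a j) * (k₁ + ((a ⟨0, hn⟩ : ℕ) : ZMod t) + b₀) ≠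
    (g : ZMod t) ^ (∑ j, a j) * (k₂ + ((a ⟨0, hn⟩ : ℕ) : ZMod t) + b₀) := by
  intro h
  have hg : (g : ZMod t) ^ (∑ j, a j) = ((g ^ (∑ j, a j) : (ZMod t)ˣ) : ZMod t) := by
    push_cast; ring
  rw [hg] at h
  have := (Units.mul_right_inj (g ^ (∑ j, a j))).mp h
  exact hk (by have := add_right_cancel this; exact add_right_cancel this)
end

section
/- With the same setup (g a unit of Z/tZ of order d, sequences c^n_k of length d^n t with c^n_k(b_n) = g^{a_1+···+a_n}(k + a_1 + b_0) mod t), for every fixed k and every α ∈ Z/tZ, the number of indices b_n ∈ {0,...,d^n t - 1} with c^n_k(b_n) = α is exactly d^n. -/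
/-!
Write an index as `b = t * q + r` with `0 ≤ r < t`. For each block index `q`, the value
`g ^ s(q) * (k + a₁(q) + r)` is an affine bijection of `r ∈ ℤ/tℤ`, so exactly one `r < t` hits `α`;
hence `b ↦ b / t` is a bijection from the indices hitting `α` onto the `dⁿ` blocks.
-/

open Finset

theorem card_filter_fin_mul_eq_of_existsUnique {m t : ℕ} (P : ℕ → ℕ → Prop)
    [DecidableRel P] (h : ∀ q < m, ∃! r, r < t ∧ P q r) :
    #{b : Fin (m * t) | P (b.val / t) (b.val % t)} = m := by
  have ht (b : Fin (m * t)) : 0 < t := Nat.pos_of_mul_pos_left b.pos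
  have hdiv (b : Fin (m * t)) : b.val / t < m := (Nat.div_lt_iff_lt_mul (ht b)).2 b.isLt
  calc #{b : Fin (m * t) | P (b.val / t) (b.val % t)}
      = #(univ : Finset (Fin m)) := by
        refine card_bij (fun b _ => ⟨b.val / t, hdiv b⟩) (fun _ _ => mem_univ _) ?_ ?_
        · intro b₁ hb₁ b₂ hb₂ hq
          simp only [mem_filter, mem_univ, true_and, Fin.mk.injEq] at hb₁ hb₂ hq
          have hr : b₁.val % t = b₂.val % t :=
            (h _ (hdiv b₁)).unique ⟨Nat.mod_lt _ (ht b₁), hb₁⟩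
              ⟨Nat.mod_lt _ (ht b₂), hq ▸ hb₂⟩
          exact Fin.ext (by rw [← Nat.div_add_mod b₁ t, ← Nat.div_add_mod b₂ t, hq, hr])
        · intro q _
          obtain ⟨r, ⟨hrt, hr⟩, -⟩ := h q q.isLt
          have ht' : 0 < t := by omega
          have hb : t * q.val + r < m * t := by nlinarith [q.isLt]
          have hbq : (t * q.val + r) / t = q := by
            rw [Nat.mul_add_div ht', Nat.div_eq_of_lt hrt, add_zero]
          have hbr : (t * q.val + r) % t = r := by rw [Nat.mul_add_mod, Nat.mod_eq_of_lt hrt]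
          refine ⟨⟨t * q.val + r, hb⟩, ?_, Fin.ext hbq⟩
          simpa only [mem_filter, mem_univ, true_and, hbq, hbr] using hr
    _ = m := card_fin m

theorem ZMod.existsUnique_lt_natCast_eq (t : ℕ) [NeZero t] (β : ZMod t) :
    ∃! r, r < t ∧ (r : ZMod t) = β :=
  ⟨β.val, ⟨β.val_lt, β.natCast_zmod_val⟩, fun r ⟨hr, hrβ⟩ => by
    rw [← hrβ, ZMod.val_natCast_of_lt hr]⟩

theorem ZMod.existsUnique_lt_mul_add_natCast_eq (t : ℕ) [NeZero t] (u : (ZMod t)ˣ)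
    (c α : ZMod t) : ∃! r, r < t ∧ (u : ZMod t) * (c + r) = α := by
  have hsolve (r : ℕ) : (u : ZMod t) * (c + r) = α ↔ (r : ZMod t) = ↑u⁻¹ * α - c := by
    rw [eq_sub_iff_add_eq', Units.eq_inv_mul_iff_mul_eq]
  simpa only [hsolve] using ZMod.existsUnique_lt_natCast_eq t (↑u⁻¹ * α - c)

theorem second_construction_count_general (t : ℕ) (ht : 0 < t) (g : (ZMod t)ˣ)
    (d : ℕ) (n : ℕ) (k α : ZMod t) :
    (Finset.univ.filter (fun b : Fin (d ^ n * t) =>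
      (g : ZMod t) ^ (∑ j ∈ Finset.range n, b.val / t / d ^ j % d) *
        (k + ((b.val / t % d : ℕ) : ZMod t) + ((b.val % t : ℕ) : ZMod t)) = α)).card
      = d ^ n := by
  have : NeZero t := ⟨ht.ne'⟩
  refine card_filter_fin_mul_eq_of_existsUnique
    (fun q r => (g : ZMod t) ^ (∑ j ∈ range n, q / d ^ j % d) * (k + (q % d : ℕ) + r) = α)
    fun q _ => ?_
  simpa only [Units.val_pow_eq_pow_val, add_assoc] using ZMod.existsUnique_lt_mul_add_natCast_eq t
    (g ^ ∑ j ∈ range n, q / d ^ j % d) (k + (q % d : ℕ)) α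

/-- Second construction, occurrence count: for g a unit of ℤ/tℤ of order d,
each value α ∈ ℤ/tℤ is taken by the sequence
c^n_k(b) = g^{a₁+⋯+aₙ}·(k + a₁ + b₀) (with b = (∑ⱼ aⱼ d^{j-1})·t + b₀ the digit
decomposition of the index b ∈ {0,…,dⁿt−1}) exactly dⁿ times. -/
theorem second_construction_count (t : ℕ) (ht : 0 < t) (g : (ZMod t)ˣ)
    (d : ℕ) (hd : orderOf g = d) (n : ℕ) (hn : 1 ≤ n) (k α : ZMod t) :
    (Finset.univ.filter (fun b : Fin (d ^ n * t) =>
      (g : ZMod t) ^ (∑ j ∈ Finset.range n, b.val / t / d ^ j % d) *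
        (k + ((b.val / t % d : ℕ) : ZMod t) + ((b.val % t : ℕ) : ZMod t)) = α)).card
      = d ^ n :=
  second_construction_count_general t ht g d n k α
end

section
/- In the first construction, at every index α, the t values z^i_{j,θ}(α) = a^{b^m(α)}(⟨β + ω_i + ⌊j/η_i⌋⟩_{t/R}) + β·(t/R), ranging over all levels i, users j of level i, and θ ∈ {0,...,r_i-1} (with β = b^{i,⟨j⟩_{η_i}}(α) + θ·η_i, η_i = R/r_i, ω_i = (∑_{ζ<i} u_ζ r_ζ)/R), are pairwise distinct, assuming ∑_i u_i r_i = t, R | t, r_i | R for all i, a^{b^m(α)} is a permutation of {0,...,t/R-1}, and b^{i,ε} = ⟨b^{i,0} + ε⟩_{η_i}. -/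
/-!
The value `π(x).val + β·(t/R)` is a base-`t/R` numeral with digits `π(x).val < t/R` and `β`, so it
determines `β` and, `π` being a bijection, the residue `β + ωᵢ + ⌊j/ηᵢ⌋` modulo `t/R`; hence it
determines the block index `ωᵢ + ⌊j/ηᵢ⌋ < t/R`. Level `i` owns the blocks whose multiples of `R`
lie in `[∑_{ζ<i} u_ζ r_ζ, ∑_{ζ≤i} u_ζ r_ζ)`, and these intervals are disjoint, so the block index
determines `i` and `⌊j/ηᵢ⌋`. Finally `β = (b⁰ᵢ + ⟨j⟩_{ηᵢ}) mod ηᵢ + θ·ηᵢ` is a base-`ηᵢ` numeral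
giving `θ` and `⟨j⟩_{ηᵢ}`.
-/

open Finset

section PartialSums

variable {ι M : Type*} [LinearOrder ι] [Fintype ι] [AddCommMonoid M] (f : ι → M)

theorem sum_filter_lt_add_eq_sum_filter_le (i : ι) :
    ∑ ζ ∈ univ.filter (· < i), f ζ + f i = ∑ ζ ∈ univ.filter (· ≤ i), f ζ := by
  rw [add_comm, ← sum_insert (by simp)]
  congr 1
  ext ζ
  simp [le_iff_lt_or_eq, or_comm]

variable [PartialOrder M] [CanonicallyOrderedAdd M]

theorem sum_filter_lt_add_le_sum (i : ι) : ∑ ζ ∈ univ.filter (· < i), f ζ + f i ≤ ∑ ζ, f ζ := by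
  rw [sum_filter_lt_add_eq_sum_filter_le]
  exact sum_le_sum_of_subset (subset_univ _)

theorem sum_filter_lt_add_le_sum_filter_lt {i i' : ι} (h : i < i') :
    ∑ ζ ∈ univ.filter (· < i), f ζ + f i ≤ ∑ ζ ∈ univ.filter (· < i'), f ζ := by
  rw [sum_filter_lt_add_eq_sum_filter_le]
  exact sum_le_sum_of_subset fun ζ hζ => by
    simp only [mem_filter, mem_univ, true_and] at hζ ⊢
    exact hζ.trans_lt h

theorem eq_of_mem_Ico_sum_filter_lt {i i' : ι} {a : M}
    (h : a ∈ Set.Ico (∑ ζ ∈ univ.filter (· < i), f ζ) (∑ ζ ∈ univ.filter (· < i), f ζ + f i))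
    (h' : a ∈ Set.Ico (∑ ζ ∈ univ.filter (· < i'), f ζ) (∑ ζ ∈ univ.filter (· < i'), f ζ + f i')) :
    i = i' := by
  by_contra hne
  rcases lt_or_gt_of_ne hne with hlt | hlt
  · exact (h.2.trans_le ((sum_filter_lt_add_le_sum_filter_lt f hlt).trans h'.1)).false
  · exact (h'.2.trans_le ((sum_filter_lt_add_le_sum_filter_lt f hlt).trans h.1)).false

end PartialSums

namespace Nat

theorem eq_and_eq_of_add_mul_eq_add_mul {n a b x y : ℕ} (ha : a < n) (hb : b < n)
    (h : a + x * n = b + y * n) : a = b ∧ x = y := by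
  have hn : 0 < n := by omega
  have hx : x = y := by
    simpa [Nat.add_mul_div_right _ _ hn, Nat.div_eq_of_lt ha, Nat.div_eq_of_lt hb] using
      congrArg (· / n) h
  subst hx
  exact ⟨by omega, rfl⟩

theorem modEq_and_eq_of_rotated_add_mul_eq {η c j j' θ θ' : ℕ} (hη : 0 < η)
    (h : (c + j % η) % η + θ * η = (c + j' % η) % η + θ' * η) : j ≡ j' [MOD η] ∧ θ = θ' := by
  obtain ⟨hrot, hθ⟩ := eq_and_eq_of_add_mul_eq_add_mul (mod_lt _ hη) (mod_lt _ hη) h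
  exact ⟨(mod_modEq j η).symm.trans ((ModEq.add_left_cancel' c hrot).trans (mod_modEq j' η)), hθ⟩

theorem div_mul_mul_lt_mul {j u η r : ℕ} (hj : j < u) (hr : 0 < r) : j / η * (η * r) < u * r :=
  calc j / η * (η * r) = j / η * η * r := (Nat.mul_assoc _ _ _).symm
    _ ≤ j * r := Nat.mul_le_mul_right _ (div_mul_le_self j η)
    _ < u * r := Nat.mul_lt_mul_of_pos_right hj hr

theorem add_div_div_mul_mem_Ico {S R r u j : ℕ} (hS : R ∣ S) (hr : r ∣ R) (hrpos : 0 < r)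
    (hj : j < u) : (S / R + j / (R / r)) * R ∈ Set.Ico S (S + u * r) := by
  have hblock : j / (R / r) * R < u * r := by
    simpa [Nat.div_mul_cancel hr] using div_mul_mul_lt_mul (η := R / r) hj hrpos
  rw [Nat.add_mul, Nat.div_mul_cancel hS]
  exact ⟨Nat.le_add_right _ _, by omega⟩

end Nat

theorem ZMod.add_eq_add_of_natCast_add_add_eq {n c a b a' b' : ℕ}
    (h : ((c + a + b : ℕ) : ZMod n) = ((c + a' + b' : ℕ) : ZMod n))
    (hlt : a + b < n) (hlt' : a' + b' < n) : a + b = a' + b' := by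
  have hcast : ((a + b : ℕ) : ZMod n) = ((a' + b' : ℕ) : ZMod n) := by
    push_cast at h ⊢
    linear_combination h
  rw [← ZMod.val_cast_of_lt hlt, hcast, ZMod.val_cast_of_lt hlt']

theorem first_construction_distinct_general (L t R : ℕ)
    (hR : R ∣ t) [NeZero (t / R)]
    (r u : Fin L → ℕ) (hr : ∀ i, r i ∣ R)
    (hsum : ∑ i, u i * r i = t)
    (hω : ∀ i : Fin L, R ∣ ∑ ζ ∈ Finset.univ.filter (· < i), u ζ * r ζ)
    (π : Equiv.Perm (ZMod (t / R)))
    (b₀ : Fin L → ℕ) :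
    Function.Injective (fun s : Σ i : Fin L, Fin (u i) × Fin (r i) =>
      let η := R / r s.1
      let ω := (∑ ζ ∈ Finset.univ.filter (· < s.1), u ζ * r ζ) / R
      let β := (b₀ s.1 + (s.2.1 : ℕ) % η) % η + (s.2.2 : ℕ) * η
      (π (((β + ω + (s.2.1 : ℕ) / η : ℕ)) : ZMod (t / R))).val + β * (t / R)) := by
  rintro ⟨i₁, j₁, θ₁⟩ ⟨i₂, j₂, θ₂⟩ heq
  simp only at heq
  have hblock := fun i (j : Fin (u i)) (θ : Fin (r i)) =>
    Nat.add_div_div_mul_mem_Ico (hω i) (hr i) θ.pos j.isLt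
  have hblock_lt : ∀ i (j : Fin (u i)), Fin (r i) → _ < t / R := fun i j θ =>
    (Nat.lt_div_iff_mul_lt' hR _).2 <| by
      rw [Nat.mul_comm]
      exact (hblock i j θ).2.trans_le ((sum_filter_lt_add_le_sum _ i).trans hsum.le)
  obtain ⟨hπ, hβ⟩ := Nat.eq_and_eq_of_add_mul_eq_add_mul (ZMod.val_lt _) (ZMod.val_lt _) heq
  have hx := π.injective (ZMod.val_injective _ hπ)
  rw [hβ] at hx
  have hk := ZMod.add_eq_add_of_natCast_add_add_eq hx (hblock_lt i₁ j₁ θ₁) (hblock_lt i₂ j₂ θ₂)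
  obtain rfl : i₁ = i₂ :=
    eq_of_mem_Ico_sum_filter_lt (fun ζ => u ζ * r ζ) (hblock i₁ j₁ θ₁) (hk ▸ hblock i₂ j₂ θ₂)
  have hRpos : 0 < R := Nat.pos_of_ne_zero fun h => NeZero.ne (t / R) (by simp [h])
  obtain ⟨hmod, hθ⟩ := Nat.modEq_and_eq_of_rotated_add_mul_eq
    (Nat.div_pos (Nat.le_of_dvd hRpos (hr i₁)) θ₁.pos) hβ
  obtain rfl : j₁ = j₂ := Fin.ext (Nat.ext_div_modEq (by omega) hmod)
  obtain rfl : θ₁ = θ₂ := Fin.ext hθ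
  rfl

/-- First construction, zero Hamming correlation at a fixed index α: the t values
z^i_{j,θ} = π(⟨β + ωᵢ + ⌊j/ηᵢ⌋⟩_{t/R}) + β·(t/R), with β = (b⁰ᵢ + ⟨j⟩_{ηᵢ}) mod ηᵢ + θ·ηᵢ,
ηᵢ = R/rᵢ, ωᵢ = (∑_{ζ<i} u_ζ r_ζ)/R, ranging over all levels i, users j of level i
and θ < rᵢ, are pairwise distinct. -/
theorem first_construction_distinct (L t R : ℕ) (ht : 0 < t) (hRpos : 0 < R)
    (hR : R ∣ t) [NeZero (t / R)]
    (r u : Fin L → ℕ) (hrpos : ∀ i, 0 < r i) (hr : ∀ i, r i ∣ R)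
    (hsum : ∑ i, u i * r i = t)
    (hω : ∀ i : Fin L, R ∣ ∑ ζ ∈ Finset.univ.filter (· < i), u ζ * r ζ)
    (π : Equiv.Perm (ZMod (t / R)))
    (b₀ : Fin L → ℕ) (hb₀ : ∀ i, b₀ i < R / r i) :
    Function.Injective (fun s : Σ i : Fin L, Fin (u i) × Fin (r i) =>
      let η := R / r s.1
      let ω := (∑ ζ ∈ Finset.univ.filter (· < s.1), u ζ * r ζ) / R
      let β := (b₀ s.1 + (s.2.1 : ℕ) % η) % η + (s.2.2 : ℕ) * η
      (π (((β + ω + (s.2.1 : ℕ) / η : ℕ)) : ZMod (t / R))).val + β * (t / R)) :=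
  first_construction_distinct_general L t R hR r u hr hsum hω π b₀
end
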